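/- Let 𝒜 be a Banach algebra, G, P ∈ 𝒜, and θ a square-zero element commuting with 𝒜 (in 𝒜 ⊗ Λ(ℝ)). Then exp(−t(G + θP)) − exp(−tG) is θ times an element of 𝒜 whose norm is at most t·‖P‖·e^{2t‖G‖}; in particular the map P ↦ (θ-coefficient of exp(−t(G+θP))) is linear in P. -/

import Mathlib

/-!
Writing `x = (A, B)` for `A + θB`, the recursion `x ^ (n + 1) = x ^ n * x` gives
`(x ^ (n + 1)).2 = A ^ n * B + (x ^ n).2 * A`, so `(x ^ n).2` is linear in `B` and, by induction,
`‖(x ^ (n + 1)).2‖ ≤ (n + 1) ‖A‖ ^ n ‖B‖`. Dividing by `(n + 1)!` and summing, the θ-coefficient of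
the exponential series converges absolutely, is linear in `B`, and has norm at most `‖B‖ e ^ ‖A‖`;
for `A = -tG`, `B = -tP` this is `t‖P‖e ^ (t‖G‖) ≤ t‖P‖e ^ (2t‖G‖)`.
-/

/-- Multiplication in `𝒜 ⊗ Λ(ℝ)` (central square-zero generator `θ` adjoined):
an element `X + θY` is encoded as the pair `(X, Y)`. -/
def grassMul {𝒜 : Type*} [Ring 𝒜] (x y : 𝒜 × 𝒜) : 𝒜 × 𝒜 :=
  (x.1 * y.1, x.1 * y.2 + x.2 * y.1)

/-- Powers in `𝒜 ⊗ Λ(ℝ)`. -/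
def grassPow {𝒜 : Type*} [Ring 𝒜] (x : 𝒜 × 𝒜) : ℕ → 𝒜 × 𝒜
  | 0 => (1, 0)
  | n + 1 => grassMul (grassPow x n) x

/-- The exponential `exp(-t(G + θP))` in `𝒜 ⊗ Λ(ℝ)`, defined by its power series. -/
noncomputable def grassExp {𝒜 : Type*} [NormedRing 𝒜] [NormedAlgebra ℂ 𝒜]
    (t : ℝ) (G P : 𝒜) : 𝒜 × 𝒜 :=
  ∑' n : ℕ, ((n.factorial : ℂ))⁻¹ • grassPow ((-(t : ℂ)) • ((G, P) : 𝒜 × 𝒜)) n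

section GrassmannPowers

variable {𝒜 : Type*}

lemma grassPow_fst [Ring 𝒜] (x : 𝒜 × 𝒜) (n : ℕ) : (grassPow x n).1 = x.1 ^ n := by
  induction n with
  | zero => simp [grassPow]
  | succ n ih => simp [grassPow, grassMul, ih, pow_succ]

lemma grassPow_succ_snd [Ring 𝒜] (x : 𝒜 × 𝒜) (n : ℕ) :
    (grassPow x (n + 1)).2 = x.1 ^ n * x.2 + (grassPow x n).2 * x.1 := by
  simp only [grassPow, grassMul, grassPow_fst]

lemma isLinearMap_grassPow_snd {R : Type*} [CommSemiring R] [Ring 𝒜] [Algebra R 𝒜] (A : 𝒜)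
    (n : ℕ) : IsLinearMap R fun B : 𝒜 => (grassPow (A, B) n).2 := by
  induction n with
  | zero => exact ⟨fun _ _ => (add_zero 0).symm, fun c _ => (smul_zero c).symm⟩
  | succ n ih =>
    refine ⟨fun B C => ?_, fun c B => ?_⟩
    · simp only [grassPow_succ_snd, ih.map_add, mul_add, add_mul]
      abel
    · simp only [grassPow_succ_snd, ih.map_smul, mul_smul_comm, smul_mul_assoc, smul_add]

-- `‖a ^ 0‖ = ‖1‖` may exceed `1`, so `n = 0` is treated apart.
lemma norm_pow_mul_le [NormedRing 𝒜] (a b : 𝒜) (n : ℕ) : ‖a ^ n * b‖ ≤ ‖a‖ ^ n * ‖b‖ := by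
  rcases n.eq_zero_or_pos with rfl | hn
  · simp
  · exact (norm_mul_le _ _).trans (by gcongr; exact norm_pow_le' a hn)

lemma norm_grassPow_succ_snd_le [NormedRing 𝒜] (x : 𝒜 × 𝒜) (n : ℕ) :
    ‖(grassPow x (n + 1)).2‖ ≤ (n + 1) * ‖x.1‖ ^ n * ‖x.2‖ := by
  induction n with
  | zero => simp [grassPow, grassMul]
  | succ n ih =>
    rw [grassPow_succ_snd]
    calc _ ≤ ‖x.1 ^ (n + 1) * x.2‖ + ‖(grassPow x (n + 1)).2‖ * ‖x.1‖ :=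
          norm_add_le_of_le le_rfl (norm_mul_le _ _)
      _ ≤ ‖x.1‖ ^ (n + 1) * ‖x.2‖ + (n + 1) * ‖x.1‖ ^ n * ‖x.2‖ * ‖x.1‖ := by
          gcongr
          exact norm_pow_mul_le _ _ _
      _ = _ := by push_cast; ring

end GrassmannPowers

section GrassmannExponential

open Nat NormedSpace

variable {𝕜 𝒜 : Type*} [RCLike 𝕜] [NormedRing 𝒜] [NormedAlgebra 𝕜 𝒜]

lemma norm_factorial_inv_smul_grassPow_succ_snd_le (x : 𝒜 × 𝒜) (n : ℕ) :
    ‖((n + 1)! : 𝕜)⁻¹ • (grassPow x (n + 1)).2‖ ≤ ‖x.2‖ * (‖x.1‖ ^ n / n !) := by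
  rw [norm_smul, norm_inv, RCLike.norm_natCast, factorial_succ]
  push_cast
  calc _ ≤ ((n + 1) * n ! : ℝ)⁻¹ * ((n + 1) * ‖x.1‖ ^ n * ‖x.2‖) := by
        gcongr
        exact norm_grassPow_succ_snd_le x n
    _ = _ := by field_simp

variable [CompleteSpace 𝒜]

lemma summable_factorial_inv_smul_grassPow_snd (x : 𝒜 × 𝒜) :
    Summable fun n => (n ! : 𝕜)⁻¹ • (grassPow x n).2 :=
  (summable_nat_add_iff 1).mp <|
    ((Real.summable_pow_div_factorial ‖x.1‖).mul_left ‖x.2‖).of_norm_bounded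
    (norm_factorial_inv_smul_grassPow_succ_snd_le x)

lemma norm_tsum_factorial_inv_smul_grassPow_snd_le (x : 𝒜 × 𝒜) :
    ‖∑' n, (n ! : 𝕜)⁻¹ • (grassPow x n).2‖ ≤ ‖x.2‖ * Real.exp ‖x.1‖ := by
  have hexp : HasSum (fun n => ‖x.2‖ * (‖x.1‖ ^ n / n !)) (‖x.2‖ * Real.exp ‖x.1‖) := by
    rw [Real.exp_eq_exp_ℝ]
    exact (expSeries_div_hasSum_exp ‖x.1‖).mul_left _
  rw [(summable_factorial_inv_smul_grassPow_snd x).tsum_eq_zero_add]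
  simpa [grassPow] using tsum_of_norm_bounded hexp (norm_factorial_inv_smul_grassPow_succ_snd_le x)

lemma hasSum_factorial_inv_smul_grassPow (x : 𝒜 × 𝒜) :
    HasSum (fun n => (n ! : 𝕜)⁻¹ • grassPow x n)
      (exp x.1, ∑' n, (n ! : 𝕜)⁻¹ • (grassPow x n).2) := by
  convert (exp_series_hasSum_exp' (𝕂 := 𝕜) x.1).prodMk
    (summable_factorial_inv_smul_grassPow_snd (𝕜 := 𝕜) x).hasSum using 1
  ext n
  · simp only [Prod.smul_fst, grassPow_fst]
  · rfl

lemma isLinearMap_tsum_factorial_inv_smul_grassPow_snd (A : 𝒜) :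
    IsLinearMap 𝕜 fun B => ∑' n, (n ! : 𝕜)⁻¹ • (grassPow (A, B) n).2 := by
  refine ⟨fun B C => ?_, fun c B => ?_⟩
  · simp only [(isLinearMap_grassPow_snd (R := 𝕜) A _).map_add, smul_add]
    exact (summable_factorial_inv_smul_grassPow_snd _).tsum_add
      (summable_factorial_inv_smul_grassPow_snd _)
  · simp only [(isLinearMap_grassPow_snd (R := 𝕜) A _).map_smul, smul_comm _ c]
    exact (summable_factorial_inv_smul_grassPow_snd _).tsum_const_smul c

end GrassmannExponential

/-- In a Banach algebra `𝒜`, `exp(-t(G+θP)) - exp(-tG)` is `θ` times an element of `𝒜`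
of norm at most `t‖P‖e^{2t‖G‖}`; in particular the θ-coefficient (Berezin integral) of
`exp(-t(G+θP))` is linear in `P`. -/
theorem grassExp_difference_bound {𝒜 : Type*} [NormedRing 𝒜] [NormedAlgebra ℂ 𝒜]
    [CompleteSpace 𝒜] (G P : 𝒜) (t : ℝ) (ht : 0 ≤ t) :
    (grassExp t G P).1 = NormedSpace.exp ((-(t : ℂ)) • G) ∧
    ‖(grassExp t G P).2‖ ≤ t * ‖P‖ * Real.exp (2 * t * ‖G‖) ∧
    IsLinearMap ℂ (fun P' : 𝒜 => (grassExp t G P').2) := by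
  set A := (-(t : ℂ)) • G
  have hexp (P' : 𝒜) : grassExp t G P' =
      (NormedSpace.exp A, ∑' n, (n.factorial : ℂ)⁻¹ • (grassPow (A, (-(t : ℂ)) • P') n).2) :=
    (hasSum_factorial_inv_smul_grassPow ((-(t : ℂ)) • (G, P'))).tsum_eq
  refine ⟨by rw [hexp], ?_, ?_⟩
  · rw [hexp]
    calc _ ≤ ‖(-(t : ℂ)) • P‖ * Real.exp ‖A‖ := norm_tsum_factorial_inv_smul_grassPow_snd_le _
      _ = t * ‖P‖ * Real.exp (t * ‖G‖) := by simp [A, norm_smul, abs_of_nonneg ht]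
      _ ≤ _ := by gcongr; nlinarith [mul_nonneg ht (norm_nonneg G)]
  · simp_rw [hexp]
    exact ((isLinearMap_tsum_factorial_inv_smul_grassPow_snd (𝕜 := ℂ) A).mk' _ ∘ₗ
      ((-(t : ℂ)) • LinearMap.id)).isLinear
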